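/- For every ν ≤ 0 and every β ∈ [0,1]: ∫_{−∞}^{ν} φ(x)·[Φ(ν − x) − Φ(β(ν − x))] dx = ∫_0^∞ φ(ν − z)·( ∫_{βz}^{z} φ(u) du ) dz ≥ (1 − β)·φ(2ν)·( 1/√(2π) − φ(ν) ). -/

import Mathlib

open MeasureTheory Real Filter Set
open scoped BigOperators ENNReal Classical

noncomputable section

namespace Paper

/-- Standard Gaussian density `φ`. -/
def gpdf (u : ℝ) : ℝ := (Real.sqrt (2 * Real.pi))⁻¹ * Real.exp (-u ^ 2 / 2)

/-- Standard Gaussian CDF `Φ`. -/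
def gcdf (t : ℝ) : ℝ := ∫ u in Set.Iic t, gpdf u

/-- Inverse Gaussian CDF `Φ⁻¹`. -/
def gcdfInv : ℝ → ℝ := Function.invFun gcdf

lemma c_pos : 0 < (Real.sqrt (2 * Real.pi))⁻¹ := by positivity

lemma gpdf_pos (u : ℝ) : 0 < gpdf u := by unfold gpdf; positivity

lemma gpdf_nonneg (u : ℝ) : 0 ≤ gpdf u := (gpdf_pos u).le

lemma gpdf_anti {a b : ℝ} (h : |b| ≤ |a|) : gpdf a ≤ gpdf b := by
  have h2 : b ^ 2 ≤ a ^ 2 := by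
    rw [← sq_abs a, ← sq_abs b]; exact pow_le_pow_left₀ (abs_nonneg b) h 2
  unfold gpdf
  exact mul_le_mul_of_nonneg_left (Real.exp_le_exp.mpr (by linarith)) c_pos.le

lemma continuous_gpdf : Continuous gpdf := by
  unfold gpdf; fun_prop

lemma integrable_gpdf : Integrable gpdf := by
  have h := (integrable_exp_neg_mul_sq (by norm_num : (0:ℝ) < 1/2)).const_mul
      (Real.sqrt (2 * Real.pi))⁻¹
  convert h using 2 with u
  unfold gpdf; ring_nf

lemma intervalIntegral_gpdf (a b : ℝ) : ∫ u in a..b, gpdf u = gcdf b - gcdf a := by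
  rw [← intervalIntegral.integral_Iic_sub_Iic integrable_gpdf.integrableOn
    integrable_gpdf.integrableOn]
  rfl

lemma gcdf_mono : Monotone gcdf := fun _ _ hab =>
  setIntegral_mono_set integrable_gpdf.integrableOn
    (Eventually.of_forall fun u => gpdf_nonneg u)
    (HasSubset.Subset.eventuallyLE (Iic_subset_Iic.mpr hab))

lemma gcdf_nonneg (t : ℝ) : 0 ≤ gcdf t :=
  setIntegral_nonneg measurableSet_Iic fun u _ => gpdf_nonneg u

lemma gcdf_le (t : ℝ) : gcdf t ≤ ∫ u, gpdf u :=
  setIntegral_le_integral integrable_gpdf (Eventually.of_forall fun u => gpdf_nonneg u)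

lemma measurable_gcdf : Measurable gcdf := gcdf_mono.measurable

lemma hasDerivAt_neg_gpdf (z : ℝ) : HasDerivAt (fun z => -gpdf z) (z * gpdf z) z := by
  have h1 : HasDerivAt (fun z : ℝ => -z ^ 2 / 2) (-z) z := by
    have := ((hasDerivAt_pow 2 z).neg).div_const 2
    exact this.congr_deriv (by ring)
  have h3 := ((h1.exp).const_mul ((Real.sqrt (2 * Real.pi))⁻¹)).neg
  refine h3.congr_deriv ?_
  unfold gpdf; ring

lemma integral_z_gpdf (ν : ℝ) (hν : ν ≤ 0) :
    ∫ z in Set.Ioc (0:ℝ) (-ν), z * gpdf z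
      = (Real.sqrt (2 * Real.pi))⁻¹ - gpdf ν := by
  rw [← intervalIntegral.integral_of_le (by linarith : (0:ℝ) ≤ -ν)]
  rw [intervalIntegral.integral_eq_sub_of_hasDerivAt
    (fun z _ => hasDerivAt_neg_gpdf z)
    ((continuous_id.mul continuous_gpdf).intervalIntegrable 0 (-ν))]
  have h0 : gpdf 0 = (Real.sqrt (2 * Real.pi))⁻¹ := by unfold gpdf; simp
  have hn : gpdf (-ν) = gpdf ν := by unfold gpdf; ring_nf
  rw [hn, h0]; ring

/-- The integral identity and lower bound used in the proof of Theorem 1. -/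
theorem gaussian_integral_identity_and_bound
    (ν β : ℝ) (hν : ν ≤ 0) (hβ : β ∈ Set.Icc (0 : ℝ) 1) :
    (∫ x in Set.Iic ν, gpdf x * (gcdf (ν - x) - gcdf (β * (ν - x)))) =
      (∫ z in Set.Ioi (0 : ℝ), gpdf (ν - z) * ∫ u in (β * z)..z, gpdf u) ∧
    (∫ z in Set.Ioi (0 : ℝ), gpdf (ν - z) * ∫ u in (β * z)..z, gpdf u) ≥
      (1 - β) * gpdf (2 * ν) * ((Real.sqrt (2 * Real.pi))⁻¹ - gpdf ν) := by
  obtain ⟨hβ0, hβ1⟩ := hβ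
  have hemb : MeasurableEmbedding (fun z : ℝ => ν - z) :=
    (MeasurableEquiv.subLeft ν).measurableEmbedding
  -- rewrite interval integrals as gcdf differences
  have hkey : ∀ z : ℝ, (∫ u in (β * z)..z, gpdf u) = gcdf z - gcdf (β * z) :=
    fun z => intervalIntegral_gpdf (β * z) z
  -- Part 1: the identity
  have hid : (∫ x in Set.Iic ν, gpdf x * (gcdf (ν - x) - gcdf (β * (ν - x)))) =
      ∫ z in Set.Ioi (0 : ℝ), gpdf (ν - z) * ∫ u in (β * z)..z, gpdf u := by
    have h1 : (∫ x in Set.Iic ν, gpdf x * (gcdf (ν - x) - gcdf (β * (ν - x))))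
        = ∫ z in (fun z : ℝ => ν - z) ⁻¹' (Set.Iic ν),
            gpdf (ν - z) * (gcdf (ν - (ν - z)) - gcdf (β * (ν - (ν - z)))) := by
      rw [← hemb.setIntegral_map
        (fun x => gpdf x * (gcdf (ν - x) - gcdf (β * (ν - x)))) (Set.Iic ν),
        Measure.map_sub_left_eq_self volume ν]
    have hpre : (fun z : ℝ => ν - z) ⁻¹' (Set.Iic ν) = Set.Ici (0:ℝ) := by
      ext z; simp [sub_le_iff_le_add]
    rw [h1, hpre, integral_Ici_eq_integral_Ioi]
    congr 1
    funext z
    rw [sub_sub_cancel, hkey]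
  refine ⟨hid, ?_⟩
  -- Part 2: the bound
  simp_rw [hkey]
  set I := ∫ u, gpdf u with hI
  have hI0 : 0 ≤ I := integral_nonneg fun u => gpdf_nonneg u
  set g : ℝ → ℝ := fun z => gpdf (ν - z) * (gcdf z - gcdf (β * z)) with hg
  have hgm : Measurable g :=
    ((continuous_gpdf.comp (continuous_const.sub continuous_id)).measurable).mul
      (measurable_gcdf.sub (measurable_gcdf.comp (measurable_id.const_mul β)))
  have hdom : Integrable (fun z : ℝ => gpdf (ν - z)) :=
    integrable_gpdf.comp_sub_left ν
  have hgint : IntegrableOn g (Set.Ioi (0:ℝ)) := by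
    refine Integrable.mono ((hdom.const_mul I).integrableOn) hgm.aestronglyMeasurable.restrict
      (Eventually.of_forall fun z => ?_)
    have h1 : |gcdf z - gcdf (β * z)| ≤ I :=
      abs_sub_le_of_nonneg_of_le (gcdf_nonneg _) (gcdf_le _) (gcdf_nonneg _) (gcdf_le _)
    rw [Real.norm_eq_abs, Real.norm_eq_abs, abs_mul, abs_of_nonneg (gpdf_nonneg _),
      abs_of_nonneg (mul_nonneg hI0 (gpdf_nonneg _))]
    calc gpdf (ν - z) * |gcdf z - gcdf (β * z)| ≤ gpdf (ν - z) * I :=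
          mul_le_mul_of_nonneg_left h1 (gpdf_nonneg _)
      _ = I * gpdf (ν - z) := mul_comm _ _
  have hg0 : ∀ z ∈ Set.Ioi (0:ℝ), 0 ≤ g z := by
    intro z hz
    have hz0 : (0:ℝ) < z := hz
    have : β * z ≤ z := by nlinarith
    exact mul_nonneg (gpdf_nonneg _) (sub_nonneg.mpr (gcdf_mono this))
  have step1 : (∫ z in Set.Ioc (0:ℝ) (-ν), g z) ≤ ∫ z in Set.Ioi (0:ℝ), g z :=
    setIntegral_mono_set hgint
      ((ae_restrict_iff' measurableSet_Ioi).mpr (Eventually.of_forall hg0))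
      (HasSubset.Subset.eventuallyLE Set.Ioc_subset_Ioi_self)
  have step2 : (∫ z in Set.Ioc (0:ℝ) (-ν), (gpdf (2*ν) * (1 - β)) * (z * gpdf z))
      ≤ ∫ z in Set.Ioc (0:ℝ) (-ν), g z := by
    refine setIntegral_mono_on
      ((continuous_const.mul (continuous_id.mul continuous_gpdf)).integrableOn_Ioc)
      (hgint.mono_set Set.Ioc_subset_Ioi_self) measurableSet_Ioc ?_
    intro z hz
    obtain ⟨hz0, hzν⟩ := hz
    have hβz : β * z ≤ z := by nlinarith
    have hA : gpdf (2 * ν) ≤ gpdf (ν - z) := by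
      apply gpdf_anti
      rw [abs_of_nonpos (by linarith), abs_of_nonpos (by linarith)]
      linarith
    have hB : (1 - β) * (z * gpdf z) ≤ gcdf z - gcdf (β * z) := by
      rw [← hkey z]
      have hc : ∫ u in (β * z)..z, gpdf z = (1 - β) * (z * gpdf z) := by
        rw [intervalIntegral.integral_const, smul_eq_mul]; ring
      rw [← hc]
      refine intervalIntegral.integral_mono_on hβz
        (intervalIntegrable_const) (continuous_gpdf.intervalIntegrable _ _) ?_
      intro u hu
      obtain ⟨hu1, hu2⟩ := hu
      apply gpdf_anti
      rw [abs_of_nonneg (le_trans (by nlinarith) hu1), abs_of_nonneg (by nlinarith)]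
      exact hu2
    calc gpdf (2*ν) * (1 - β) * (z * gpdf z) = gpdf (2*ν) * ((1-β) * (z * gpdf z)) := by ring
      _ ≤ gpdf (ν - z) * (gcdf z - gcdf (β * z)) :=
          mul_le_mul hA hB (mul_nonneg (by linarith) (mul_nonneg hz0.le (gpdf_nonneg z))) (gpdf_nonneg _)
  have step3 : (∫ z in Set.Ioc (0:ℝ) (-ν), (gpdf (2*ν) * (1 - β)) * (z * gpdf z))
      = (1 - β) * gpdf (2 * ν) * ((Real.sqrt (2 * Real.pi))⁻¹ - gpdf ν) := by
    rw [integral_const_mul, integral_z_gpdf ν hν]; ring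
  linarith [step1, step2, step3.symm.le]

end Paper
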